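/- G(γ) tends to 2 as γ tends to +∞. -/

import Mathlib

/-!
For `x > 0` the Mills ratio `R = (1 - Φ) / φ` satisfies `q(x) < R(x) < p(x)`, where
`p = 1/x - 1/x³ + 3/x⁵` and `q = p - 15/x⁷`: the functions `(1 - Φ) - φ p` and `φ q - (1 - Φ)` tend
to `0` at infinity and are strictly increasing, with derivatives `15 φ/x⁶` and `105 φ/x⁸`.
Hence `R = t - t³ + 3t⁵ + t⁶ ε` with `t = 1/x` and `ε → 0`. Substituting this into
`G = xR · x³((1 + x²)R - x) / (x²(1 - xR))²` cancels the leading terms and exhibits `G(x)` as a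
rational function of `(t, ε)` that is continuous at `(0, 0)`, where it equals `2`.
-/

open Real MeasureTheory

/-- Standard normal density `φ(x) = (2π)^(−1/2) exp(−x²/2)`. -/
noncomputable def stdPDF (x : ℝ) : ℝ := (Real.sqrt (2 * Real.pi))⁻¹ * Real.exp (-x ^ 2 / 2)

/-- Standard normal cumulative distribution function `Φ(x) = ∫_{−∞}^x φ(u) du`. -/
noncomputable def stdCDF (x : ℝ) : ℝ := ∫ u in Set.Iic x, stdPDF u

/-- Mills hazard `h(γ) = φ(γ)/(1 − Φ(γ))`. -/
noncomputable def millsHazard (γ : ℝ) : ℝ := stdPDF γ / (1 - stdCDF γ)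

/-- `G(γ) = (1/(h(γ) − γ))·(1/(h(γ) − γ) − γ)` where `h` is the Mills hazard. -/
noncomputable def G (γ : ℝ) : ℝ :=
  (1 / (millsHazard γ - γ)) * (1 / (millsHazard γ - γ) - γ)

open Filter Set Topology ProbabilityTheory

theorem neg_of_hasDerivAt_pos_of_tendsto_zero {f f' : ℝ → ℝ} {a : ℝ}
    (hf : ∀ x, a ≤ x → HasDerivAt f (f' x) x) (hf' : ∀ x, a < x → 0 < f' x)
    (hlim : Tendsto f atTop (𝓝 0)) : f a < 0 := by
  have hmono : StrictMonoOn f (Ici a) := by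
    refine strictMonoOn_of_deriv_pos (convex_Ici a)
      (fun x hx => (hf x hx).continuousAt.continuousWithinAt) fun x hx => ?_
    rw [interior_Ici] at hx
    rw [(hf x hx.le).deriv]
    exact hf' x hx
  have hle : f (a + 1) ≤ 0 := by
    refine ge_of_tendsto hlim ?_
    filter_upwards [eventually_ge_atTop (a + 1)] with x hx
    exact hmono.monotoneOn (by simp) (by simp; linarith) hx
  exact (hmono (by simp) (by simp) (by linarith)).trans_le hle

lemma stdPDF_eq_gaussianPDFReal : stdPDF = gaussianPDFReal 0 1 := by
  ext x
  simp [stdPDF, gaussianPDFReal]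

lemma stdPDF_pos (x : ℝ) : 0 < stdPDF x := by
  rw [stdPDF_eq_gaussianPDFReal]
  exact gaussianPDFReal_pos _ _ _ one_ne_zero

lemma integrable_stdPDF : Integrable stdPDF := by
  rw [stdPDF_eq_gaussianPDFReal]
  exact integrable_gaussianPDFReal _ _

lemma continuous_stdPDF : Continuous stdPDF := by
  unfold stdPDF; fun_prop

lemma hasDerivAt_stdPDF (x : ℝ) : HasDerivAt stdPDF (-x * stdPDF x) x := by
  have h : HasDerivAt (fun y : ℝ => -y ^ 2 / 2) (-x) x :=
    ((hasDerivAt_pow 2 x).neg.div_const 2).congr_deriv (by simp; ring)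
  refine (h.exp.const_mul (√(2 * π))⁻¹).congr_deriv ?_
  simp only [stdPDF]; ring

lemma tendsto_stdPDF_atTop : Tendsto stdPDF atTop (𝓝 0) := by
  have h : Tendsto (fun x : ℝ => -x ^ 2 / 2) atTop atBot :=
    (tendsto_neg_atBot_iff.2 (tendsto_pow_atTop two_ne_zero)).atBot_div_const two_pos
  have := (tendsto_exp_atBot.comp h).const_mul (√(2 * π))⁻¹
  rwa [mul_zero] at this

noncomputable def stdTail (x : ℝ) : ℝ := ∫ u in Ioi x, stdPDF u

lemma one_sub_stdCDF (x : ℝ) : 1 - stdCDF x = stdTail x := by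
  have h := intervalIntegral.integral_Iic_add_Ioi (b := x)
    integrable_stdPDF.integrableOn integrable_stdPDF.integrableOn
  rw [stdPDF_eq_gaussianPDFReal, integral_gaussianPDFReal_eq_one _ one_ne_zero] at h
  rw [stdCDF, stdTail, stdPDF_eq_gaussianPDFReal]
  linarith

lemma hasDerivAt_stdTail (x : ℝ) : HasDerivAt stdTail (-stdPDF x) x := by
  have h : stdTail = fun y => stdTail 0 - ∫ u in (0 : ℝ)..y, stdPDF u := by
    ext y
    rw [← intervalIntegral.integral_Ioi_sub_Ioi' integrable_stdPDF.integrableOn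
      integrable_stdPDF.integrableOn, stdTail, stdTail, sub_sub_cancel]
  rw [h]
  exact ((continuous_stdPDF.integral_hasStrictDerivAt 0 x).hasDerivAt).const_sub _

lemma tendsto_stdTail_atTop : Tendsto stdTail atTop (𝓝 0) := by
  have h := tendsto_setIntegral_of_antitone (μ := volume) (f := stdPDF)
    (fun x : ℝ => measurableSet_Ioi) (fun _ _ hxy => Ioi_subset_Ioi hxy)
    ⟨0, integrable_stdPDF.integrableOn⟩
  have hempty : ⋂ x : ℝ, Ioi x = ∅ := by
    ext x; simpa using ⟨x, le_rfl⟩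
  rwa [hempty, Measure.restrict_empty, integral_zero_measure] at h

lemma stdTail_pos (x : ℝ) : 0 < stdTail x := by
  have h := neg_of_hasDerivAt_pos_of_tendsto_zero (f := fun y => -stdTail y) (a := x)
    (fun y _ => (hasDerivAt_stdTail y).neg.congr_deriv (neg_neg _)) (fun y _ => stdPDF_pos y)
    (by simpa using tendsto_stdTail_atTop.neg)
  simpa using h

lemma stdTail_lt_stdPDF_mul {x : ℝ} (hx : 0 < x) :
    stdTail x < stdPDF x * (x⁻¹ - x⁻¹ ^ 3 + 3 * x⁻¹ ^ 5) := by
  have hderiv : ∀ y : ℝ, 0 < y → HasDerivAt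
      (fun y => stdTail y - stdPDF y * (y⁻¹ - y⁻¹ ^ 3 + 3 * y⁻¹ ^ 5))
      (15 * stdPDF y * y⁻¹ ^ 6) y := by
    intro y hy
    have hinv := hasDerivAt_inv hy.ne'
    refine ((hasDerivAt_stdTail y).sub ((hasDerivAt_stdPDF y).mul
      ((hinv.sub (hinv.pow 3)).add ((hinv.pow 5).const_mul 3)))).congr_deriv ?_
    simp only [Pi.add_apply, Pi.sub_apply, Pi.pow_apply, inv_pow]
    field_simp
    ring
  have hlim : Tendsto (fun y => stdTail y - stdPDF y * (y⁻¹ - y⁻¹ ^ 3 + 3 * y⁻¹ ^ 5))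
      atTop (𝓝 0) := by
    have ht := tendsto_inv_atTop_zero (𝕜 := ℝ)
    simpa using tendsto_stdTail_atTop.sub
      (tendsto_stdPDF_atTop.mul ((ht.sub (ht.pow 3)).add ((ht.pow 5).const_mul 3)))
  have := neg_of_hasDerivAt_pos_of_tendsto_zero (fun y hy => hderiv y (hx.trans_le hy))
    (fun y hy => by have := stdPDF_pos y; have := hx.trans hy; positivity) hlim
  linarith

lemma stdPDF_mul_lt_stdTail {x : ℝ} (hx : 0 < x) :
    stdPDF x * (x⁻¹ - x⁻¹ ^ 3 + 3 * x⁻¹ ^ 5 - 15 * x⁻¹ ^ 7) < stdTail x := by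
  have hderiv : ∀ y : ℝ, 0 < y → HasDerivAt
      (fun y => stdPDF y * (y⁻¹ - y⁻¹ ^ 3 + 3 * y⁻¹ ^ 5 - 15 * y⁻¹ ^ 7) - stdTail y)
      (105 * stdPDF y * y⁻¹ ^ 8) y := by
    intro y hy
    have hinv := hasDerivAt_inv hy.ne'
    refine (((hasDerivAt_stdPDF y).mul (((hinv.sub (hinv.pow 3)).add
      ((hinv.pow 5).const_mul 3)).sub ((hinv.pow 7).const_mul 15))).sub
      (hasDerivAt_stdTail y)).congr_deriv ?_
    simp only [Pi.add_apply, Pi.sub_apply, Pi.pow_apply, inv_pow]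
    field_simp
    ring
  have hlim : Tendsto (fun y => stdPDF y * (y⁻¹ - y⁻¹ ^ 3 + 3 * y⁻¹ ^ 5 - 15 * y⁻¹ ^ 7) - stdTail y)
      atTop (𝓝 0) := by
    have ht := tendsto_inv_atTop_zero (𝕜 := ℝ)
    simpa using (tendsto_stdPDF_atTop.mul (((ht.sub (ht.pow 3)).add
      ((ht.pow 5).const_mul 3)).sub ((ht.pow 7).const_mul 15))).sub tendsto_stdTail_atTop
  have := neg_of_hasDerivAt_pos_of_tendsto_zero (fun y hy => hderiv y (hx.trans_le hy))
    (fun y hy => by have := stdPDF_pos y; have := hx.trans hy; positivity) hlim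
  linarith

noncomputable def millsRatio (x : ℝ) : ℝ := stdTail x / stdPDF x

lemma millsRatio_pos (x : ℝ) : 0 < millsRatio x :=
  div_pos (stdTail_pos x) (stdPDF_pos x)

lemma millsHazard_eq_inv_millsRatio (x : ℝ) : millsHazard x = (millsRatio x)⁻¹ := by
  rw [millsHazard, one_sub_stdCDF, millsRatio, inv_div]

lemma G_eq_millsRatio {x : ℝ} (hx : x ≠ 0) :
    G x = x * millsRatio x * (x ^ 3 * ((1 + x ^ 2) * millsRatio x - x)) /
      (x ^ 2 * (1 - x * millsRatio x)) ^ 2 := by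
  have hR := (millsRatio_pos x).ne'
  rw [G, millsHazard_eq_inv_millsRatio,
    show (millsRatio x)⁻¹ - x = (1 - x * millsRatio x) / millsRatio x by field_simp, one_div_div]
  rcases eq_or_ne (1 - x * millsRatio x) 0 with h | h
  · simp [h]
  · rw [div_sub' h, div_mul_div_comm, mul_pow, div_eq_div_iff (by positivity) (by positivity)]
    ring

noncomputable def millsRemainder (x : ℝ) : ℝ :=
  x ^ 6 * (millsRatio x - (x⁻¹ - x⁻¹ ^ 3 + 3 * x⁻¹ ^ 5))

lemma tendsto_millsRemainder_atTop : Tendsto millsRemainder atTop (𝓝 0) := by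
  have hlower : Tendsto (fun x : ℝ => -15 * x⁻¹) atTop (𝓝 0) := by
    simpa using tendsto_inv_atTop_zero.const_mul (-15 : ℝ)
  refine tendsto_of_tendsto_of_tendsto_of_le_of_le' hlower tendsto_const_nhds ?_ ?_ <;>
    filter_upwards [eventually_gt_atTop 0] with x hx
  · have h : x⁻¹ - x⁻¹ ^ 3 + 3 * x⁻¹ ^ 5 - 15 * x⁻¹ ^ 7 < millsRatio x :=
      (lt_div_iff₀ (stdPDF_pos x)).2 (by rw [mul_comm]; exact stdPDF_mul_lt_stdTail hx)
    rw [millsRemainder, show -15 * x⁻¹ = x ^ 6 * (-15 * x⁻¹ ^ 7) by field_simp]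
    gcongr
    linarith
  · have h : millsRatio x < x⁻¹ - x⁻¹ ^ 3 + 3 * x⁻¹ ^ 5 :=
      (div_lt_iff₀ (stdPDF_pos x)).2 (by rw [mul_comm]; exact stdTail_lt_stdPDF_mul hx)
    exact mul_nonpos_of_nonneg_of_nonpos (by positivity) (by linarith)

noncomputable def GExpansion (t e : ℝ) : ℝ :=
  (1 - t ^ 2 + 3 * t ^ 4 + t ^ 5 * e) * (2 + 3 * t ^ 2 + t * e + t ^ 3 * e) /
    (1 - 3 * t ^ 2 - t ^ 3 * e) ^ 2

lemma G_eq_GExpansion {x : ℝ} (hx : x ≠ 0) : G x = GExpansion x⁻¹ (millsRemainder x) := by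
  have hA : x * millsRatio x = 1 - x⁻¹ ^ 2 + 3 * x⁻¹ ^ 4 + x⁻¹ ^ 5 * millsRemainder x := by
    rw [millsRemainder]; field_simp; ring
  have hB : x ^ 2 * (1 - x * millsRatio x) = 1 - 3 * x⁻¹ ^ 2 - x⁻¹ ^ 3 * millsRemainder x := by
    rw [millsRemainder]; field_simp; ring
  have hC : x ^ 3 * ((1 + x ^ 2) * millsRatio x - x) =
      2 + 3 * x⁻¹ ^ 2 + x⁻¹ * millsRemainder x + x⁻¹ ^ 3 * millsRemainder x := by
    rw [millsRemainder]; field_simp; ring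
  rw [G_eq_millsRatio hx, hB, hC, hA, GExpansion]

/-- `G(γ)` tends to `2` as `γ → +∞`. -/
theorem G_tendsto_two_atTop : Filter.Tendsto G Filter.atTop (nhds 2) := by
  have hcont : ContinuousAt (Function.uncurry GExpansion) (0, 0) := by
    unfold Function.uncurry GExpansion
    fun_prop (disch := norm_num)
  have hlim := hcont.tendsto.comp
    (tendsto_inv_atTop_zero.prodMk_nhds tendsto_millsRemainder_atTop)
  rw [show Function.uncurry GExpansion (0, 0) = 2 by norm_num [GExpansion]] at hlim
  refine hlim.congr' ?_
  filter_upwards [eventually_ne_atTop 0] with x hx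
  exact (G_eq_GExpansion hx).symm
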